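/- Let μ > 0 and Δt > 0 be real constants and let θ ∈ (1/2, 1). Then there exists ρ ∈ (0,1), depending only on θ, Δt and μ, such that for every twice continuously differentiable function u : ℝ² → ℝ whose support is a compact subset of the open unit square (0,1)², one has ‖R_{θ−1} u‖²_{L²} ≤ ρ ‖R_θ u‖²_{L²}, where R_θ u := −θΔt μ ∂²u/∂y² + u. -/

import Mathlib

/-!
Write `a = Δt μ` and `A, B, C` for the squared `L²` norms of `∂²u/∂y²`, `∂u/∂y` and `u`.
Integrating by parts, `∫ u ∂²u/∂y² = -B`, so `‖R_c u‖² = (c a)² A + 2 c a B + C`: the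
cross term has the sign of `c`, which is why `R_{θ-1}` is smaller than `R_θ`. The `A`-terms
compare with ratio `((1-θ)/θ)² < 1`, and the `C`-term is absorbed by the `B`-terms through the
Poincaré inequality `C ≤ B` on the strip `0 < y < 1`.
-/

/-- Partial derivative of u : ℝ × ℝ → ℝ with respect to the second coordinate. -/
noncomputable def partialY (u : ℝ × ℝ → ℝ) (p : ℝ × ℝ) : ℝ :=
  fderiv ℝ u p (0, 1)

/-- Second partial derivative of u : ℝ × ℝ → ℝ with respect to the second coordinate. -/
noncomputable def partialYY (u : ℝ × ℝ → ℝ) (p : ℝ × ℝ) : ℝ :=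
  fderiv ℝ (partialY u) p (0, 1)

/-- The operator R_θ u := −θ Δt μ ∂²u/∂y² + u. -/
noncomputable def Rop (θ Δt μ : ℝ) (u : ℝ × ℝ → ℝ) (p : ℝ × ℝ) : ℝ :=
  -θ * Δt * μ * partialYY u p + u p

open MeasureTheory

section IntegrationByParts

variable {E : Type*} [NormedAddCommGroup E] [NormedSpace ℝ E] [FiniteDimensional ℝ E]
  [MeasurableSpace E] [BorelSpace E] {μ : Measure E} [μ.IsAddHaarMeasure]

theorem integral_mul_fderiv_eq_neg_of_hasCompactSupport {f g : E → ℝ} (hf : ContDiff ℝ 1 f)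
    (hg : ContDiff ℝ 1 g) (hcs : HasCompactSupport f) (v : E) :
    ∫ x, f x * fderiv ℝ g x v ∂μ = -∫ x, fderiv ℝ f x v * g x ∂μ := by
  have hf' : Continuous fun x => fderiv ℝ f x v := hf.continuous_fderiv_apply one_ne_zero
    |>.comp (continuous_id.prodMk continuous_const)
  have hg' : Continuous fun x => fderiv ℝ g x v := hg.continuous_fderiv_apply one_ne_zero
    |>.comp (continuous_id.prodMk continuous_const)
  exact integral_mul_fderiv_eq_neg_fderiv_mul_of_integrable
    ((hf'.mul hg.continuous).integrable_of_hasCompactSupport (hcs.fderiv_apply ℝ v).mul_right)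
    ((hf.continuous.mul hg').integrable_of_hasCompactSupport hcs.mul_right)
    ((hf.continuous.mul hg.continuous).integrable_of_hasCompactSupport hcs.mul_right)
    (fun x _ => (hf.differentiable one_ne_zero) x) (fun x _ => (hg.differentiable one_ne_zero) x)

end IntegrationByParts

theorem ContDiff.partialY {u : ℝ × ℝ → ℝ} {m n : WithTop ℕ∞} (hu : ContDiff ℝ n u)
    (hmn : m + 1 ≤ n) : ContDiff ℝ m (partialY u) :=
  (hu.fderiv_right hmn).clm_apply contDiff_const

theorem HasCompactSupport.partialY {u : ℝ × ℝ → ℝ} (hcs : HasCompactSupport u) :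
    HasCompactSupport (partialY u) :=
  hcs.fderiv_apply ℝ _

theorem HasCompactSupport.sq {X M : Type*} [TopologicalSpace X] [MonoidWithZero M] {f : X → M}
    (hf : HasCompactSupport f) : HasCompactSupport fun x => f x ^ 2 :=
  hf.comp_left (g := (· ^ 2)) (zero_pow two_ne_zero)

theorem integral_mul_partialYY {u : ℝ × ℝ → ℝ} (hu : ContDiff ℝ 2 u) (hcs : HasCompactSupport u) :
    ∫ p, u p * partialYY u p = -∫ p, partialY u p ^ 2 := by
  simpa only [partialYY, partialY, sq] using
    integral_mul_fderiv_eq_neg_of_hasCompactSupport (μ := volume)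
      (hu.of_le (by norm_num)) (hu.partialY (by norm_num)) hcs ((0 : ℝ), (1 : ℝ))

theorem fderiv_sq_apply {u : ℝ × ℝ → ℝ} (hu : Differentiable ℝ u) (p : ℝ × ℝ) :
    fderiv ℝ (fun q => u q ^ 2) p (0, 1) = 2 * u p * partialY u p := by
  rw [fderiv_fun_pow 2 (hu p)]
  simp [partialY]

theorem neg_two_mul_mul_mul_le {x y t : ℝ} (ht : |t| ≤ 1 / 2) :
    -(2 * x * y * t) ≤ (x ^ 2 + y ^ 2) / 2 := by
  obtain ⟨ht₁, ht₂⟩ := abs_le.mp ht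
  nlinarith [mul_nonneg (by linarith : 0 ≤ 1 / 2 - t) (sq_nonneg (x + y)),
    mul_nonneg (by linarith : 0 ≤ 1 / 2 + t) (sq_nonneg (x - y))]

theorem integral_sq_le_integral_sq_partialY {u : ℝ × ℝ → ℝ} (hu : ContDiff ℝ 1 u)
    (hcs : HasCompactSupport u) (hsupp : tsupport u ⊆ Set.univ ×ˢ Set.Icc 0 1) :
    ∫ p, u p ^ 2 ≤ ∫ p, partialY u p ^ 2 := by
  have hu₀ : Continuous (partialY u) := (hu.partialY (m := 0) (by norm_num)).continuous
  have hsq : Integrable fun p => u p ^ 2 :=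
    (hu.continuous.pow 2).integrable_of_hasCompactSupport hcs.sq
  have hsq' : Integrable fun p => partialY u p ^ 2 :=
    (hu₀.pow 2).integrable_of_hasCompactSupport hcs.partialY.sq
  -- integrate `∂_y (u²) · (y - 1/2)` by parts
  have hibp : ∫ p, u p ^ 2 = ∫ p, -(2 * u p * partialY u p * (p.2 - 1 / 2)) := by
    have h := integral_mul_fderiv_eq_neg_of_hasCompactSupport (μ := volume) (hu.pow 2)
      (contDiff_snd.sub (contDiff_const (c := 1 / 2))) hcs.sq ((0 : ℝ), (1 : ℝ))
    simp only [fderiv_sub_const, fderiv_snd, fderiv_sq_apply (hu.differentiable one_ne_zero)]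
      at h
    simpa [integral_neg] using h
  have hpt : ∀ p : ℝ × ℝ, -(2 * u p * partialY u p * (p.2 - 1 / 2))
      ≤ (u p ^ 2 + partialY u p ^ 2) / 2 := by
    intro p
    by_cases hp : u p = 0
    · simp only [hp]; nlinarith [sq_nonneg (partialY u p)]
    · have hy := (hsupp (subset_closure hp)).2
      exact neg_two_mul_mul_mul_le (abs_le.mpr ⟨by linarith [hy.1], by linarith [hy.2]⟩)
  have hint : Integrable fun p : ℝ × ℝ => -(2 * u p * partialY u p * (p.2 - 1 / 2)) :=
    ((((hu.continuous.const_mul 2).mul hu₀).mul (continuous_snd.sub continuous_const)).neg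
      ).integrable_of_hasCompactSupport hcs.mul_left.mul_right.mul_right.neg
  have hrhs : Integrable fun p => (u p ^ 2 + partialY u p ^ 2) / 2 :=
    (hsq.add hsq').div_const 2
  have hle := integral_mono hint hrhs hpt
  rw [← hibp, integral_div, integral_add hsq hsq'] at hle
  linarith

theorem integral_sq_Rop {u : ℝ × ℝ → ℝ} (hu : ContDiff ℝ 2 u) (hcs : HasCompactSupport u)
    (c Δt μ : ℝ) :
    ∫ p, Rop c Δt μ u p ^ 2 = (c * Δt * μ) ^ 2 * (∫ p, partialYY u p ^ 2)
      + 2 * (c * Δt * μ) * (∫ p, partialY u p ^ 2) + ∫ p, u p ^ 2 := by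
  have hv : ContDiff ℝ 1 (partialY u) := hu.partialY (by norm_num)
  have hw : Continuous (partialYY u) := (hv.partialY (m := 0) (by norm_num)).continuous
  have hww : Integrable fun p => partialYY u p ^ 2 :=
    (hw.pow 2).integrable_of_hasCompactSupport hcs.partialY.partialY.sq
  have huw : Integrable fun p => u p * partialYY u p :=
    (hu.continuous.mul hw).integrable_of_hasCompactSupport hcs.mul_right
  have huu : Integrable fun p => u p ^ 2 :=
    (hu.continuous.pow 2).integrable_of_hasCompactSupport hcs.sq
  have hexpand : (fun p => Rop c Δt μ u p ^ 2) = fun p => (c * Δt * μ) ^ 2 * partialYY u p ^ 2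
      - 2 * (c * Δt * μ) * (u p * partialYY u p) + u p ^ 2 := by
    funext p
    simp only [Rop]
    ring
  have hlin : Integrable fun p => (c * Δt * μ) ^ 2 * partialYY u p ^ 2
      - 2 * (c * Δt * μ) * (u p * partialYY u p) :=
    (hww.const_mul _).sub (huw.const_mul _)
  rw [hexpand, integral_add hlin huu,
    integral_sub (hww.const_mul _) (huw.const_mul _), integral_const_mul, integral_const_mul,
    integral_mul_partialYY hu hcs]
  ring

theorem exists_contraction_factor {a θ : ℝ} (ha : 0 < a) (hθ : θ ∈ Set.Ioo (1 / 2 : ℝ) 1) :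
    ∃ ρ ∈ Set.Ioo (0 : ℝ) 1, ∀ A B C : ℝ, 0 ≤ A → 0 ≤ B → C ≤ B →
      ((θ - 1) * a) ^ 2 * A + 2 * ((θ - 1) * a) * B + C
        ≤ ρ * ((θ * a) ^ 2 * A + 2 * (θ * a) * B + C) := by
  obtain ⟨hθ₁, hθ₂⟩ := hθ
  have hθ₀ : 0 < θ := by linarith
  -- `ρ ≥ 1 / (1 + 2 θ a)` gives `(1 - ρ) C ≤ (1 - ρ) B ≤ 2 ρ θ a B`
  set ρ := max (((1 - θ) / θ) ^ 2) (1 / (1 + 2 * θ * a))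
  have hρ₁ : ρ < 1 := max_lt
    (pow_lt_one₀ (by bound) ((div_lt_one hθ₀).mpr (by linarith)) two_ne_zero)
    ((div_lt_one (by positivity)).mpr (by nlinarith))
  refine ⟨ρ, ⟨by positivity, hρ₁⟩, fun A B C hA hB hCB => ?_⟩
  have hρA : (1 - θ) ^ 2 ≤ ρ * θ ^ 2 := by
    rw [← div_le_iff₀ (by positivity), ← div_pow]; exact le_max_left _ _
  have hρB : 1 ≤ ρ * (1 + 2 * θ * a) := by
    rw [← div_le_iff₀ (by positivity)]; exact le_max_right _ _
  nlinarith [mul_nonneg (sub_nonneg.2 hρA) (mul_nonneg (sq_nonneg a) hA),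
    mul_nonneg (sub_nonneg.2 hρB) hB, mul_nonneg (sub_nonneg.2 hρ₁.le) (sub_nonneg.2 hCB),
    mul_nonneg (mul_nonneg ha.le (sub_nonneg.2 hθ₂.le)) hB]

/-- Let μ > 0, Δt > 0 and θ ∈ (1/2, 1). Then there exists ρ ∈ (0,1),
depending only on θ, Δt and μ, such that for every C² function u : ℝ² → ℝ whose support
is a compact subset of the open unit square (0,1)²,
‖R_{θ−1} u‖²_{L²} ≤ ρ ‖R_θ u‖²_{L²}. -/
theorem stmt6
    (μ Δt θ : ℝ) (hμ : 0 < μ) (hΔt : 0 < Δt) (hθ : θ ∈ Set.Ioo (1 / 2 : ℝ) 1) :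
    ∃ ρ ∈ Set.Ioo (0 : ℝ) 1,
      ∀ u : ℝ × ℝ → ℝ, ContDiff ℝ 2 u → HasCompactSupport u →
        tsupport u ⊆ Set.Ioo (0 : ℝ) 1 ×ˢ Set.Ioo (0 : ℝ) 1 →
        ∫ p, (Rop (θ - 1) Δt μ u p) ^ 2 ≤ ρ * ∫ p, (Rop θ Δt μ u p) ^ 2 := by
  obtain ⟨ρ, hρ, hcontract⟩ := exists_contraction_factor (mul_pos hΔt hμ) hθ
  refine ⟨ρ, hρ, fun u hu hcs hsupp => ?_⟩
  have hpoincare := integral_sq_le_integral_sq_partialY (hu.of_le (by norm_num)) hcs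
    (hsupp.trans (Set.prod_mono (Set.subset_univ _) Set.Ioo_subset_Icc_self))
  rw [integral_sq_Rop hu hcs, integral_sq_Rop hu hcs]
  simpa only [mul_assoc] using hcontract _ _ _ (integral_nonneg fun _ => sq_nonneg _)
    (integral_nonneg fun _ => sq_nonneg _) hpoincare
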